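/- Consider the piecewise linear regression model Y = Σ_{v=1}^V Xᵀβ⁰_v · 1(X ∈ X_v) + ε, where ε has mean zero and is independent of X, and ℝᵖ = ∪_{v=1}^V X_v is a measurable partition. For τ ∈ (0,p] and each v, define δ⁰_{τ,v} ∈ ℝᵖ coordinatewise by: δ⁰_{τ,v,j} = sign(β⁰_{v,j}) if |{i : |β⁰_{v,i}| > |β⁰_{v,j}|}| < ⌊τ⌋; δ⁰_{τ,v,j} = (τ−⌊τ⌋)·sign(β⁰_{v,j}) if |{i : |β⁰_{v,i}| > |β⁰_{v,j}|}| = ⌊τ⌋; and 0 otherwise. Then the piecewise-constant localizer δ⁰_τ(x) = Σ_v δ⁰_{τ,v} 1(x ∈ X_v) is a global maximizer of E[(Y − Σ_v (X − δ_v)ᵀβ⁰_v 1(X ∈ X_v))²] over all choices (δ_1,…,δ_V) with ‖δ_v‖₁ ≤ τ and ‖δ_v‖_∞ ≤ 1 for every v. -/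

import Mathlib

open MeasureTheory Set
open scoped Classical

/-- Greedy localizer for a linear model: `δ0 j = sign(β j)` for the `⌊τ⌋`
coordinates with largest `|β|`, `(τ - ⌊τ⌋) sign(β j)` at the `(⌊τ⌋+1)`-st
largest, and `0` otherwise. -/
noncomputable def greedyDelta {p : ℕ} (β : Fin p → ℝ) (τ : ℝ) : Fin p → ℝ :=
  fun j =>
    if (Finset.univ.filter fun i => |β j| < |β i|).card < ⌊τ⌋₊ then
      Real.sign (β j)
    else if (Finset.univ.filter fun i => |β j| < |β i|).card = ⌊τ⌋₊ then
      (τ - ⌊τ⌋₊) * Real.sign (β j)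
    else 0

namespace GreedyAux

variable {p : ℕ}

/-- rank of coordinate `j`: number of coordinates with strictly larger value. -/
noncomputable def rk (a : Fin p → ℝ) (j : Fin p) : ℕ :=
  (Finset.univ.filter fun i => a j < a i).card

theorem rk_lt_rk {a : Fin p → ℝ} {j k : Fin p} (h : a k < a j) : rk a j < rk a k := by
  apply Finset.card_lt_card
  rw [Finset.ssubset_iff_of_subset]
  · exact ⟨j, by simp [h], by simp⟩
  · intro i hi
    simp only [Finset.mem_filter, Finset.mem_univ, true_and] at hi ⊢
    linarith

theorem rk_lt_iff {a : Fin p → ℝ} (hd : ∀ i j, i ≠ j → a i ≠ a j) {j k : Fin p} :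
    rk a j < rk a k ↔ a k < a j := by
  constructor
  · intro h
    rcases lt_trichotomy (a k) (a j) with h1 | h1 | h1
    · exact h1
    · by_cases hjk : j = k
      · subst hjk; omega
      · exact absurd h1.symm (hd j k hjk)
    · exact absurd (rk_lt_rk h1) (by omega)
  · exact rk_lt_rk

theorem rk_inj {a : Fin p → ℝ} (hd : ∀ i j, i ≠ j → a i ≠ a j) :
    Function.Injective (rk a) := by
  intro j k h
  by_contra hjk
  rcases (hd j k hjk).lt_or_gt with h1 | h1
  · exact absurd (rk_lt_rk h1) (by omega)
  · exact absurd (rk_lt_rk h1) (by omega)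

theorem rk_lt (a : Fin p → ℝ) (j : Fin p) : rk a j < p := by
  unfold rk
  have h1 : (Finset.univ.filter fun i => a j < a i) ⊆ Finset.univ.erase j := by
    intro i hi
    simp only [Finset.mem_filter, Finset.mem_univ, true_and] at hi
    simp only [Finset.mem_erase, Finset.mem_univ, and_true]
    rintro rfl; exact lt_irrefl _ hi
  have h2 := Finset.card_le_card h1
  rw [Finset.card_erase_of_mem (Finset.mem_univ j), Finset.card_univ, Fintype.card_fin] at h2
  have := j.pos
  omega

noncomputable def rkF (a : Fin p → ℝ) : Fin p → Fin p := fun j => ⟨rk a j, rk_lt a j⟩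

theorem rkF_bij {a : Fin p → ℝ} (hd : ∀ i j, i ≠ j → a i ≠ a j) :
    Function.Bijective (rkF a) := by
  have hinj : Function.Injective (rkF a) := fun j k h =>
    rk_inj hd (congrArg Fin.val h)
  exact ⟨hinj, Finite.surjective_of_injective hinj⟩

theorem card_val_lt {m : ℕ} (hm : m ≤ p) :
    (Finset.univ.filter fun k : Fin p => (k : ℕ) < m).card = m := by
  rcases lt_or_eq_of_le hm with h | h
  · have he : (Finset.univ.filter fun k : Fin p => (k : ℕ) < m) = Finset.Iio ⟨m, h⟩ := by
      ext k; simp [Fin.lt_def]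
    rw [he, Fin.card_Iio]
  · have he : (Finset.univ.filter fun k : Fin p => (k : ℕ) < m) = Finset.univ := by
      ext k; simpa using lt_of_lt_of_le k.isLt h.symm.le
    rw [he, Finset.card_univ, Fintype.card_fin, h]

theorem card_rk_lt {a : Fin p → ℝ} (hd : ∀ i j, i ≠ j → a i ≠ a j) {m : ℕ} (hm : m ≤ p) :
    (Finset.univ.filter fun j => rk a j < m).card = m := by
  have hb := rkF_bij hd
  let e := Equiv.ofBijective _ hb
  have key : (Finset.univ.filter fun j => rk a j < m) =
      (Finset.univ.filter fun k : Fin p => (k : ℕ) < m).image e.symm := by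
    ext j
    simp only [Finset.mem_filter, Finset.mem_univ, true_and, Finset.mem_image]
    constructor
    · intro h
      exact ⟨e j, h, e.symm_apply_apply j⟩
    · rintro ⟨k, hk, rfl⟩
      have h2 : rk a (e.symm k) = ((e (e.symm k) : Fin p) : ℕ) := rfl
      rwa [h2, e.apply_symm_apply]
  rw [key, Finset.card_image_of_injective _ e.symm.injective, card_val_lt hm]

/-- greedy weights -/
noncomputable def gw (a : Fin p → ℝ) (τ : ℝ) : Fin p → ℝ := fun j =>
  if rk a j < ⌊τ⌋₊ then 1
  else if rk a j = ⌊τ⌋₊ then τ - ⌊τ⌋₊ else 0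

theorem gw_nonneg {a : Fin p → ℝ} {τ : ℝ} (hτ : 0 ≤ τ) (j : Fin p) : 0 ≤ gw a τ j := by
  have h1 : (⌊τ⌋₊ : ℝ) ≤ τ := Nat.floor_le hτ
  unfold gw; split_ifs <;> linarith

theorem gw_le_one {a : Fin p → ℝ} {τ : ℝ} (j : Fin p) : gw a τ j ≤ 1 := by
  have h2 : τ < ⌊τ⌋₊ + 1 := Nat.lt_floor_add_one τ
  unfold gw; split_ifs <;> linarith

theorem gw_sum_eq {a : Fin p → ℝ} (hd : ∀ i j, i ≠ j → a i ≠ a j) {τ : ℝ}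
    (hτ0 : 0 < τ) (hτp : τ ≤ p) : ∑ j, gw a τ j = τ := by
  set m := ⌊τ⌋₊ with hm
  have hfl : (m : ℝ) ≤ τ := Nat.floor_le hτ0.le
  by_cases hmp : m < p
  · obtain ⟨js, hjs⟩ := (rkF_bij hd).2 ⟨m, hmp⟩
    have hjsr : rk a js = m := congrArg Fin.val hjs
    have hpt : ∀ j, gw a τ j = (if rk a j < m then (1 : ℝ) else 0)
        + (if rk a j = m then (τ - m) else 0) := by
      intro j
      unfold gw
      rw [← hm]
      by_cases h1 : rk a j < m
      · rw [if_pos h1, if_pos h1, if_neg (by omega : ¬ rk a j = m)]; ring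
      · rw [if_neg h1, if_neg h1]
        by_cases h2 : rk a j = m
        · rw [if_pos h2]; ring
        · rw [if_neg h2]; ring
    rw [Finset.sum_congr rfl fun j _ => hpt j, Finset.sum_add_distrib]
    have e1 : (∑ j, if rk a j < m then (1 : ℝ) else 0) = m := by
      rw [Finset.sum_boole, card_rk_lt hd hmp.le]
    have hsingle : (Finset.univ.filter fun j => rk a j = m) = {js} := by
      rw [Finset.eq_singleton_iff_unique_mem]
      refine ⟨by simp [hjsr], fun k hk => ?_⟩
      simp only [Finset.mem_filter, Finset.mem_univ, true_and] at hk
      exact rk_inj hd (by rw [hk, hjsr])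
    have e2 : (∑ j, if rk a j = m then (τ - (m : ℝ)) else 0) = τ - m := by
      rw [← Finset.sum_filter, hsingle, Finset.sum_singleton]
    rw [e1, e2]; ring
  · have hpm : (p : ℝ) ≤ m := by exact_mod_cast Nat.le_of_not_lt hmp
    have hτeq : τ = p := le_antisymm hτp (le_trans hpm hfl)
    have hall : ∀ j, gw a τ j = 1 := by
      intro j
      unfold gw
      rw [if_pos]
      have := rk_lt a j
      omega
    rw [Finset.sum_congr rfl fun j _ => hall j, Finset.sum_const, Finset.card_univ,
      Fintype.card_fin, nsmul_eq_mul, mul_one, hτeq]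

theorem gw_max {a : Fin p → ℝ} (ha : ∀ j, 0 ≤ a j) (hd : ∀ i j, i ≠ j → a i ≠ a j)
    {τ : ℝ} (hτ0 : 0 < τ) (hτp : τ ≤ p) {w : Fin p → ℝ}
    (hw0 : ∀ j, 0 ≤ w j) (hw1 : ∀ j, w j ≤ 1) (hws : ∑ j, w j ≤ τ) :
    ∑ j, w j * a j ≤ ∑ j, gw a τ j * a j := by
  set m := ⌊τ⌋₊ with hm
  by_cases hmp : m < p
  · obtain ⟨js, hjs⟩ := (rkF_bij hd).2 ⟨m, hmp⟩
    have hjsr : rk a js = m := congrArg Fin.val hjs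
    set b := a js with hb
    have key : 0 ≤ ∑ j, (gw a τ j - w j) * a j := by
      have expand : ∀ j : Fin p, (gw a τ j - w j) * a j
          = (gw a τ j - w j) * (a j - b) + (gw a τ j - w j) * b := fun j => by ring
      rw [Finset.sum_congr rfl fun j _ => expand j, Finset.sum_add_distrib]
      have t1 : 0 ≤ ∑ j, (gw a τ j - w j) * (a j - b) := by
        refine Finset.sum_nonneg fun j _ => ?_
        rcases lt_trichotomy (rk a j) m with h1 | h1 | h1
        · have hg : gw a τ j = 1 := by unfold gw; rw [← hm, if_pos h1]
          have hab : b ≤ a j := by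
            have := (rk_lt_iff hd (j := j) (k := js)).mp (by omega)
            linarith
          rw [hg]
          exact mul_nonneg (by linarith [hw1 j]) (by linarith)
        · have : j = js := rk_inj hd (by rw [h1, hjsr])
          subst this
          rw [hb, sub_self, mul_zero]
        · have hg : gw a τ j = 0 := by
            unfold gw; rw [← hm, if_neg (by omega), if_neg (by omega)]
          have hab : a j ≤ b := by
            have := (rk_lt_iff hd (j := js) (k := j)).mp (by omega)
            linarith
          rw [hg]
          have : (0 - w j) * (a j - b) = w j * (b - a j) := by ring
          rw [this]
          exact mul_nonneg (hw0 j) (by linarith)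
      have t2 : 0 ≤ (∑ j, (gw a τ j - w j) * b) := by
        have : (∑ j, (gw a τ j - w j) * b) = ((∑ j, gw a τ j) - ∑ j, w j) * b := by
          rw [← Finset.sum_sub_distrib, Finset.sum_mul]
        rw [this, gw_sum_eq hd hτ0 hτp]
        exact mul_nonneg (by linarith) (ha js)
      linarith
    have : ∑ j, (gw a τ j - w j) * a j
        = (∑ j, gw a τ j * a j) - ∑ j, w j * a j := by
      rw [← Finset.sum_sub_distrib]
      exact Finset.sum_congr rfl fun j _ => by ring
    linarith [key, this ▸ key]
  · refine Finset.sum_le_sum fun j _ => ?_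
    have hg : gw a τ j = 1 := by
      unfold gw
      rw [if_pos]
      have := rk_lt a j
      omega
    rw [hg, one_mul]
    nlinarith [hw1 j, ha j, hw0 j]

theorem sign_mul_self (x : ℝ) : Real.sign x * x = |x| := by
  rcases lt_trichotomy x 0 with h | h | h
  · rw [Real.sign_of_neg h, abs_of_neg h]; ring
  · simp [h]
  · rw [Real.sign_of_pos h, abs_of_pos h]; ring

theorem abs_sign_le (x : ℝ) : |Real.sign x| ≤ 1 := by
  rcases lt_trichotomy x 0 with h | h | h
  · rw [Real.sign_of_neg h]; norm_num
  · simp [h, Real.sign_zero]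
  · rw [Real.sign_of_pos h]; norm_num

theorem greedy_eq (β : Fin p → ℝ) (τ : ℝ) (j : Fin p) :
    greedyDelta β τ j = gw (fun i => |β i|) τ j * Real.sign (β j) := by
  unfold greedyDelta gw rk
  split_ifs <;> ring

end GreedyAux

/-- in the piecewise linear regression model
`Y = Σ_v Xᵀβ⁰_v 1(X ∈ X_v) + ε`, the piecewise-constant localizer whose value
on each piece `X_v` is the greedy vector `greedyDelta (β v) τ` is a global
maximizer of `E[(Y − Σ_v (X − δ_v)ᵀβ⁰_v 1(X ∈ X_v))²]` over all choices
`(δ_1,…,δ_V)` with `‖δ_v‖₁ ≤ τ` and `‖δ_v‖_∞ ≤ 1` for every `v`. -/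
theorem greedy_selection_piecewise_linear_regression
    {p V : ℕ} {Ω : Type*} [MeasurableSpace Ω]
    (μ : Measure Ω) [IsProbabilityMeasure μ]
    (X : Ω → Fin p → ℝ) (hXmeas : Measurable X)
    (ε : Ω → ℝ) (β : Fin V → Fin p → ℝ)
    (A : Fin V → Set (Fin p → ℝ))
    (hAmeas : ∀ v, MeasurableSet (A v))
    (hAdisj : Pairwise (Function.onFun Disjoint A))
    (hAcover : (⋃ v, A v) = univ)
    (hApos : ∀ v, 0 < μ (X ⁻¹' A v))
    (Y : Ω → ℝ)
    (hY : ∀ ω, Y ω = (∑ v, (A v).indicator (fun x => ∑ j, x j * β v j) (X ω)) + ε ω)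
    (hX2 : ∀ j, Integrable (fun ω => (X ω j) ^ 2) μ)
    (hY2 : Integrable (fun ω => (Y ω) ^ 2) μ)
    (hε : Integrable ε μ) (hεmean : ∫ ω, ε ω ∂μ = 0)
    (hε2 : Integrable (fun ω => (ε ω) ^ 2) μ)
    (hindep : ProbabilityTheory.IndepFun ε X μ)
    (hdistinct : ∀ v, ∀ i j : Fin p, i ≠ j → |β v i| ≠ |β v j|)
    (τ : ℝ) (hτ : τ ∈ Ioc (0:ℝ) p) :
    (∀ v, (∑ j, |greedyDelta (β v) τ j| ≤ τ ∧ ∀ j, |greedyDelta (β v) τ j| ≤ 1)) ∧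
      ∀ δ : Fin V → Fin p → ℝ,
        (∀ v, (∑ j, |δ v j|) ≤ τ) → (∀ v j, |δ v j| ≤ 1) →
        (∫ ω, (Y ω - ∑ v, (A v).indicator
            (fun x => ∑ j, (x j - δ v j) * β v j) (X ω)) ^ 2 ∂μ) ≤
          ∫ ω, (Y ω - ∑ v, (A v).indicator
            (fun x => ∑ j, (x j - greedyDelta (β v) τ j) * β v j) (X ω)) ^ 2 ∂μ := by
  open GreedyAux in
  obtain ⟨hτ0, hτp'⟩ := hτ
  have hτp : τ ≤ (p : ℝ) := hτp'
  -- bounds on the greedy vector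
  have habs_le : ∀ v j, |greedyDelta (β v) τ j| ≤ gw (fun i => |β v i|) τ j := by
    intro v j
    rw [greedy_eq, abs_mul, abs_of_nonneg (gw_nonneg hτ0.le j)]
    calc gw (fun i => |β v i|) τ j * |Real.sign (β v j)|
        ≤ gw (fun i => |β v i|) τ j * 1 :=
          mul_le_mul_of_nonneg_left (abs_sign_le _) (gw_nonneg hτ0.le j)
      _ = gw (fun i => |β v i|) τ j := mul_one _
  have part1 : ∀ v, (∑ j, |greedyDelta (β v) τ j| ≤ τ ∧ ∀ j, |greedyDelta (β v) τ j| ≤ 1) := by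
    intro v
    constructor
    · calc (∑ j, |greedyDelta (β v) τ j|) ≤ ∑ j, gw (fun i => |β v i|) τ j :=
            Finset.sum_le_sum fun j _ => habs_le v j
        _ = τ := gw_sum_eq (fun i j h => hdistinct v i j h) hτ0 hτp
    · exact fun j => le_trans (habs_le v j) (gw_le_one j)
  refine ⟨part1, ?_⟩
  intro δ hδ1 hδinf
  -- notation
  set B : Fin V → Set Ω := fun v => X ⁻¹' A v with hB
  have hBmeas : ∀ v, MeasurableSet (B v) := fun v => hXmeas (hAmeas v)
  have hBdisj : ∀ ⦃v w : Fin V⦄, v ≠ w → Disjoint (B v) (B w) :=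
    fun v w h => Disjoint.preimage X (hAdisj h)
  -- rewrite the residual
  have key_rewrite : ∀ (d : Fin V → Fin p → ℝ) (ω : Ω),
      Y ω - ∑ v, (A v).indicator (fun x => ∑ j, (x j - d v j) * β v j) (X ω)
      = ε ω + ∑ v, (B v).indicator (fun _ => ∑ j, d v j * β v j) ω := by
    intro d ω
    rw [hY ω]
    have hsplit : ∀ v : Fin V, (A v).indicator (fun x => ∑ j, (x j - d v j) * β v j) (X ω)
        = (A v).indicator (fun x => ∑ j, x j * β v j) (X ω)
          - (B v).indicator (fun _ => ∑ j, d v j * β v j) ω := by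
      intro v
      by_cases h : X ω ∈ A v
      · have h' : ω ∈ B v := h
        rw [Set.indicator_of_mem h, Set.indicator_of_mem h, Set.indicator_of_mem h']
        rw [← Finset.sum_sub_distrib]
        exact Finset.sum_congr rfl fun j _ => by ring
      · have h' : ω ∉ B v := h
        rw [Set.indicator_of_notMem h, Set.indicator_of_notMem h,
          Set.indicator_of_notMem h']
        ring
    rw [Finset.sum_congr rfl fun v _ => hsplit v, Finset.sum_sub_distrib]
    ring
  -- integrability of pieces
  have hIc : ∀ (c : ℝ) (v : Fin V), Integrable ((B v).indicator fun _ => c) μ :=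
    fun c v => (integrable_const c).indicator (hBmeas v)
  have hIεc : ∀ v : Fin V, Integrable ((B v).indicator ε) μ :=
    fun v => hε.indicator (hBmeas v)
  -- independence: integral of ε over B v vanishes
  have hεB : ∀ v : Fin V, ∫ ω, (B v).indicator ε ω ∂μ = 0 := by
    intro v
    have hm : Measurable ((A v).indicator (fun _ => (1:ℝ))) :=
      measurable_const.indicator (hAmeas v)
    have hcomp : ((A v).indicator (fun _ => (1:ℝ))) ∘ X = (B v).indicator (fun _ => (1:ℝ)) := by
      funext ω
      by_cases h : X ω ∈ A v
      · have h' : ω ∈ B v := h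
        simp [Function.comp, Set.indicator_of_mem h, Set.indicator_of_mem h']
      · have h' : ω ∉ B v := h
        simp [Function.comp, Set.indicator_of_notMem h, Set.indicator_of_notMem h']
    have hind2 : ProbabilityTheory.IndepFun ε ((B v).indicator fun _ => (1:ℝ)) μ := by
      have := hindep.comp measurable_id hm
      rwa [hcomp] at this
    have hmul := hind2.integral_mul_eq_mul_integral hε.aestronglyMeasurable (hIc 1 v).aestronglyMeasurable
    have hfun : (ε * (B v).indicator fun _ => (1:ℝ)) = (B v).indicator ε := by
      funext ω
      by_cases h : ω ∈ B v
      · simp [Set.indicator_of_mem h]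
      · simp [Set.indicator_of_notMem h]
    rw [hfun, hεmean, zero_mul] at hmul
    exact hmul
  -- square of the piecewise-constant part
  have hSsq : ∀ (r : Fin V → ℝ) (ω : Ω),
      (∑ v, (B v).indicator (fun _ => r v) ω) * (∑ v, (B v).indicator (fun _ => r v) ω)
      = ∑ v, (B v).indicator (fun _ => (r v) ^ 2) ω := by
    intro r ω
    by_cases h : ∃ v, ω ∈ B v
    · obtain ⟨v0, h0⟩ := h
      have hz1 : ∀ w ∈ Finset.univ, w ≠ v0 → (B w).indicator (fun _ => r w) ω = 0 := by
        intro w _ hw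
        have : ω ∉ B w := fun hmem => (hBdisj hw).le_bot ⟨hmem, h0⟩
        simp [Set.indicator_of_notMem this]
      have hz2 : ∀ w ∈ Finset.univ, w ≠ v0 → (B w).indicator (fun _ => (r w) ^ 2) ω = 0 := by
        intro w _ hw
        have : ω ∉ B w := fun hmem => (hBdisj hw).le_bot ⟨hmem, h0⟩
        simp [Set.indicator_of_notMem this]
      rw [Finset.sum_eq_single v0 hz1 (fun h => absurd (Finset.mem_univ v0) h),
        Finset.sum_eq_single v0 hz2 (fun h => absurd (Finset.mem_univ v0) h)]
      rw [Set.indicator_of_mem h0, Set.indicator_of_mem h0]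
      ring
    · push_neg at h
      simp [Set.indicator_of_notMem (h _)]
  -- cross term
  have hcross : ∀ (r : Fin V → ℝ) (ω : Ω),
      ε ω * (∑ v, (B v).indicator (fun _ => r v) ω)
      = ∑ v, r v * (B v).indicator ε ω := by
    intro r ω
    rw [Finset.mul_sum]
    refine Finset.sum_congr rfl fun v _ => ?_
    by_cases h : ω ∈ B v
    · rw [Set.indicator_of_mem h, Set.indicator_of_mem h]; ring
    · rw [Set.indicator_of_notMem h, Set.indicator_of_notMem h]; ring
  -- the objective value
  have hobj : ∀ d : Fin V → Fin p → ℝ,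
      (∫ ω, (Y ω - ∑ v, (A v).indicator
          (fun x => ∑ j, (x j - d v j) * β v j) (X ω)) ^ 2 ∂μ)
      = (∫ ω, (ε ω) ^ 2 ∂μ)
        + ∑ v, (∑ j, d v j * β v j) ^ 2 * (μ (B v)).toReal := by
    intro d
    set r : Fin V → ℝ := fun v => ∑ j, d v j * β v j with hr
    have hpt : ∀ ω, (Y ω - ∑ v, (A v).indicator
        (fun x => ∑ j, (x j - d v j) * β v j) (X ω)) ^ 2
        = (ε ω) ^ 2 + ((∑ v, (2 * r v) * (B v).indicator ε ω)
            + ∑ v, (B v).indicator (fun _ => (r v) ^ 2) ω) := by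
      intro ω
      rw [key_rewrite d ω]
      have e1 : (ε ω + ∑ v, (B v).indicator (fun _ => r v) ω) ^ 2
          = (ε ω) ^ 2 + (2 * (ε ω * ∑ v, (B v).indicator (fun _ => r v) ω)
            + (∑ v, (B v).indicator (fun _ => r v) ω)
              * (∑ v, (B v).indicator (fun _ => r v) ω)) := by ring
      rw [e1, hcross r ω, hSsq r ω, Finset.mul_sum]
      congr 2
      exact Finset.sum_congr rfl fun v _ => by ring
    have hint1 : Integrable (fun ω => ∑ v, (2 * r v) * (B v).indicator ε ω) μ :=
      integrable_finset_sum _ fun v _ => (hIεc v).const_mul _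
    have hint2 : Integrable (fun ω => ∑ v, (B v).indicator (fun _ => (r v) ^ 2) ω) μ :=
      integrable_finset_sum _ fun v _ => hIc _ v
    calc (∫ ω, (Y ω - ∑ v, (A v).indicator
          (fun x => ∑ j, (x j - d v j) * β v j) (X ω)) ^ 2 ∂μ)
        = ∫ ω, ((ε ω) ^ 2 + ((∑ v, (2 * r v) * (B v).indicator ε ω)
            + ∑ v, (B v).indicator (fun _ => (r v) ^ 2) ω)) ∂μ :=
          integral_congr_ae (Filter.Eventually.of_forall hpt)
      _ = (∫ ω, (ε ω) ^ 2 ∂μ)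
          + ((∫ ω, ∑ v, (2 * r v) * (B v).indicator ε ω ∂μ)
            + ∫ ω, ∑ v, (B v).indicator (fun _ => (r v) ^ 2) ω ∂μ) := by
          have hadd : Integrable (fun ω => (∑ v, (2 * r v) * (B v).indicator ε ω)
              + ∑ v, (B v).indicator (fun _ => (r v) ^ 2) ω) μ := hint1.add hint2
          rw [integral_add hε2 hadd, integral_add hint1 hint2]
      _ = (∫ ω, (ε ω) ^ 2 ∂μ)
          + ∑ v, (r v) ^ 2 * (μ (B v)).toReal := by
          rw [integral_finset_sum _ fun v _ => (hIεc v).const_mul _,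
            integral_finset_sum _ fun v _ => hIc _ v]
          have z1 : (∑ v, ∫ ω, (2 * r v) * (B v).indicator ε ω ∂μ) = 0 := by
            refine Finset.sum_eq_zero fun v _ => ?_
            rw [integral_const_mul, hεB v, mul_zero]
          have z2 : ∀ v : Fin V, (∫ ω, (B v).indicator (fun _ => (r v) ^ 2) ω ∂μ)
              = (r v) ^ 2 * (μ (B v)).toReal := by
            intro v
            rw [integral_indicator_const _ (hBmeas v), smul_eq_mul, mul_comm, measureReal_def]
          rw [z1, zero_add]
          exact congrArg _ (Finset.sum_congr rfl fun v _ => z2 v)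
  -- compare the two objectives
  rw [hobj δ, hobj (fun v => greedyDelta (β v) τ)]
  refine add_le_add_right (Finset.sum_le_sum fun v _ => ?_) _
  refine mul_le_mul_of_nonneg_right ?_ ENNReal.toReal_nonneg
  -- termwise comparison of squared inner products
  have hgval : (∑ j, greedyDelta (β v) τ j * β v j)
      = ∑ j, gw (fun i => |β v i|) τ j * |β v j| := by
    refine Finset.sum_congr rfl fun j _ => ?_
    rw [greedy_eq, mul_assoc, sign_mul_self]
  have hgnn : 0 ≤ ∑ j, greedyDelta (β v) τ j * β v j := by
    rw [hgval]
    exact Finset.sum_nonneg fun j _ => mul_nonneg (gw_nonneg hτ0.le j) (abs_nonneg _)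
  have habs : |∑ j, δ v j * β v j| ≤ ∑ j, greedyDelta (β v) τ j * β v j := by
    rw [hgval]
    calc |∑ j, δ v j * β v j| ≤ ∑ j, |δ v j * β v j| := Finset.abs_sum_le_sum_abs _ _
      _ = ∑ j, |δ v j| * |β v j| := Finset.sum_congr rfl fun j _ => abs_mul _ _
      _ ≤ ∑ j, gw (fun i => |β v i|) τ j * |β v j| :=
          gw_max (fun j => abs_nonneg _) (fun i j h => hdistinct v i j h) hτ0 hτp
            (fun j => abs_nonneg _) (fun j => hδinf v j)
            (hδ1 v)
  have h1 := abs_le.mp habs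
  exact sq_le_sq' (by linarith [h1.1]) h1.2
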